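/- For the automaton A constructed from the graph G as above, the maximum size of a synchronizing set of states equals α(G) + 1, where α(G) is the maximum size of an independent set in G. -/

import Mathlib

/-!
A synchronizing set whose states all end in `f` consists of `f` and states `s_i`, and
`s_i` reaches `f` only if the letter `ṽ_i` is read before any letter of a neighbour of `v_i`
(which would trap it in `t_i`); so two adjacent `s_i, s_j` cannot both reach `f`, and such a
set has at most `α(G) + 1` states. Conversely, reading the vertices of an independent set `I`
sends `f` and all `s_i`, `i ∈ I`, to `f`. A synchronizing set with any other target `s_m`
or `t_m` lies inside `{s_m, t_m}`, hence has at most `2 ≤ α(G) + 1` states.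
-/

def deltaStar {Q A : Type*} (δ : Q → A → Q) (q : Q) (w : List A) : Q :=
  w.foldl δ q

def IsSyncSet {Q A : Type*} (δ : Q → A → Q) (S : Set Q) : Prop :=
  ∃ (w : List A) (q : Q), ∀ s ∈ S, deltaStar δ s w = q

inductive St (p : ℕ) : Type where
  | s : Fin p → St p
  | t : Fin p → St p
  | f : St p
deriving DecidableEq

def gDelta {p : ℕ} (G : SimpleGraph (Fin p)) [DecidableRel G.Adj] :
    St p → Fin p → St p
  | St.s i, j => if i = j then St.f else if G.Adj i j then St.t i else St.s i
  | St.t i, _ => St.t i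
  | St.f, _ => St.f

section Automaton

variable {Q A : Type*} (δ : Q → A → Q)

@[simp]
lemma deltaStar_nil (q : Q) : deltaStar δ q [] = q := rfl

lemma deltaStar_cons (q : Q) (a : A) (w : List A) :
    deltaStar δ q (a :: w) = deltaStar δ (δ q a) w := rfl

lemma deltaStar_of_forall_eq {q : Q} (hq : ∀ a, δ q a = q) (w : List A) :
    deltaStar δ q w = q :=
  List.foldl_fixed' hq w

end Automaton

namespace St

variable {p : ℕ} (G : SimpleGraph (Fin p)) [DecidableRel G.Adj]

@[simp]
lemma deltaStar_f (w : List (Fin p)) : deltaStar (gDelta G) f w = f :=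
  deltaStar_of_forall_eq _ (fun _ => rfl) w

@[simp]
lemma deltaStar_t (i : Fin p) (w : List (Fin p)) : deltaStar (gDelta G) (t i) w = t i :=
  deltaStar_of_forall_eq _ (fun _ => rfl) w

lemma deltaStar_s_cons (i a : Fin p) (w : List (Fin p)) :
    deltaStar (gDelta G) (s i) (a :: w) =
      if i = a then f else if G.Adj i a then t i else deltaStar (gDelta G) (s i) w := by
  rw [deltaStar_cons, gDelta]
  split_ifs <;> simp

lemma deltaStar_s_mem (i : Fin p) (w : List (Fin p)) :
    deltaStar (gDelta G) (s i) w ∈ ({s i, t i, f} : Set (St p)) := by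
  induction w with
  | nil => simp
  | cons a w ih =>
    rw [deltaStar_s_cons]
    split_ifs <;> simp_all

lemma deltaStar_s_eq_f_of_mem {i : Fin p} {w : List (Fin p)} (hi : i ∈ w)
    (hw : ∀ j ∈ w, ¬ G.Adj i j) : deltaStar (gDelta G) (s i) w = f := by
  induction w with
  | nil => simp at hi
  | cons a w ih =>
    rw [deltaStar_s_cons, if_neg (hw a List.mem_cons_self)]
    split_ifs with hia
    · rfl
    · exact ih ((List.mem_cons.1 hi).resolve_left hia)
        (fun j hj => hw j (List.mem_cons_of_mem a hj))

lemma not_adj_of_deltaStar_s_eq_f {i j : Fin p} {w : List (Fin p)}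
    (hi : deltaStar (gDelta G) (s i) w = f) (hj : deltaStar (gDelta G) (s j) w = f) :
    ¬ G.Adj i j := by
  intro hij
  induction w with
  | nil => simp at hi
  | cons a w ih =>
    rw [deltaStar_s_cons] at hi hj
    split_ifs at hi hj <;> subst_vars <;> simp_all [G.adj_symm hij]

def verticesToF (w : List (Fin p)) : Finset (Fin p) :=
  Finset.univ.filter fun i => deltaStar (gDelta G) (s i) w = f

lemma isIndepSet_verticesToF (w : List (Fin p)) :
    G.IsIndepSet (verticesToF G w : Set (Fin p)) := by
  intro i hi j hj _
  rw [Finset.mem_coe, verticesToF, Finset.mem_filter] at hi hj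
  exact not_adj_of_deltaStar_s_eq_f G hi.2 hj.2

lemma card_le_of_forall_deltaStar_eq_f {S : Finset (St p)} {w : List (Fin p)}
    (hS : ∀ x ∈ S, deltaStar (gDelta G) x w = f) :
    S.card ≤ (verticesToF G w).card + 1 := by
  have hsub : S ⊆ insert f ((verticesToF G w).image s) := by
    intro x hx
    have hx' := hS x hx
    cases x with
    | s i => simp_all [verticesToF]
    | t i => simp at hx'
    | f => exact Finset.mem_insert_self _ _
  calc S.card ≤ (insert f ((verticesToF G w).image s)).card := Finset.card_le_card hsub
    _ ≤ ((verticesToF G w).image s).card + 1 := Finset.card_insert_le _ _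
    _ ≤ (verticesToF G w).card + 1 := by gcongr; exact Finset.card_image_le

lemma card_le_two_of_forall_deltaStar_eq {S : Finset (St p)} {w : List (Fin p)} {q : St p}
    (hq : q ≠ f) (hS : ∀ x ∈ S, deltaStar (gDelta G) x w = q) : S.card ≤ 2 := by
  obtain ⟨m, hm⟩ : ∃ m, S ⊆ {s m, t m} := by
    cases q with
    | f => exact absurd rfl hq
    | s m | t m =>
      refine ⟨m, fun x hx => ?_⟩
      have hx' := hS x hx
      clear hS hx
      cases x with
      | s i => have := deltaStar_s_mem G i w; simp_all
      | t i | f => simp_all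
  exact (Finset.card_le_card hm).trans Finset.card_le_two

lemma isSyncSet_insert_f_image_s {I : Finset (Fin p)} (hI : G.IsIndepSet (I : Set (Fin p))) :
    IsSyncSet (gDelta G) (↑(insert f (I.image s)) : Set (St p)) := by
  refine ⟨I.toList, f, fun x hx => ?_⟩
  simp only [Finset.coe_insert, Finset.coe_image, Set.mem_insert_iff, Set.mem_image,
    Finset.mem_coe] at hx
  rcases hx with rfl | ⟨i, hi, rfl⟩
  · exact deltaStar_f G _
  · refine deltaStar_s_eq_f_of_mem G (Finset.mem_toList.2 hi) fun j hj hij => ?_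
    exact hI hi (Finset.mem_toList.1 hj) (G.ne_of_adj hij) hij

end St

open St in
/-- The maximum size of a synchronizing set in the automaton built from G
equals α(G) + 1, where α(G) is the independence number of G. -/
theorem stmt_9 {p : ℕ} (G : SimpleGraph (Fin p)) [DecidableRel G.Adj] (α : ℕ)
    (hα : IsGreatest {k | ∃ I : Finset (Fin p),
      (I : Set (Fin p)).Pairwise (fun a b => ¬ G.Adj a b) ∧ I.card = k} α)
    (hα1 : 1 ≤ α) :
    IsGreatest {k | ∃ S : Finset (St p),
      IsSyncSet (gDelta G) (↑S : Set (St p)) ∧ S.card = k} (α + 1) := by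
  obtain ⟨⟨I, hI, rfl⟩, hmax⟩ := hα
  refine ⟨⟨_, isSyncSet_insert_f_image_s G hI, ?_⟩, ?_⟩
  · rw [Finset.card_insert_of_notMem (by simp), Finset.card_image_of_injective _ fun _ _ => s.inj]
  rintro k ⟨S, ⟨w, q, hS⟩, rfl⟩
  by_cases hq : q = f
  · subst hq
    have := hmax ⟨_, isIndepSet_verticesToF G w, rfl⟩
    have := card_le_of_forall_deltaStar_eq_f G hS
    omega
  · have := card_le_two_of_forall_deltaStar_eq G hq hS
    omega
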